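/- Let k1, k2 ≥ 1, let C1, C2 : Matrix (Fin k1) (Fin k2) ℝ, and set R = C2 − C1. The bi-matrix game (C1, C2) is potential if and only if for all i : Fin (k1−1) and j : Fin (k2−1), R (castSucc i) (castSucc j) − R (succ i) (castSucc j) − R (castSucc i) (succ j) + R (succ i) (succ j) = 0, i.e., the four-cycle condition holds for all adjacent pairs of strategies. -/
import Mathlib


/-- A bi-matrix game `(C1, C2)` is potential if it admits a potential matrix `P`. -/
def IsPotentialBimatrix {k1 k2 : ℕ} (C1 C2 : Matrix (Fin k1) (Fin k2) ℝ) : Prop :=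
  ∃ P : Matrix (Fin k1) (Fin k2) ℝ,
    (∀ i i' : Fin k1, ∀ j : Fin k2, C1 i j - C1 i' j = P i j - P i' j) ∧
    (∀ i : Fin k1, ∀ j j' : Fin k2, C2 i j - C2 i j' = P i j - P i j')

theorem stmt4 (k1 k2 : ℕ) (hk1 : 1 ≤ k1) (hk2 : 1 ≤ k2)
    (C1 C2 R : Matrix (Fin k1) (Fin k2) ℝ) (hR : R = C2 - C1) :
    IsPotentialBimatrix C1 C2 ↔
      ∀ (i : Fin (k1 - 1)) (j : Fin (k2 - 1)),
        R ⟨(i : ℕ), by have := i.isLt; omega⟩ ⟨(j : ℕ), by have := j.isLt; omega⟩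
          - R ⟨(i : ℕ) + 1, by have := i.isLt; omega⟩ ⟨(j : ℕ), by have := j.isLt; omega⟩
          - R ⟨(i : ℕ), by have := i.isLt; omega⟩ ⟨(j : ℕ) + 1, by have := j.isLt; omega⟩
          + R ⟨(i : ℕ) + 1, by have := i.isLt; omega⟩ ⟨(j : ℕ) + 1, by have := j.isLt; omega⟩
          = 0 := by
  subst hR
  simp only [Matrix.sub_apply]
  constructor
  · rintro ⟨P, h1, h2⟩ i j
    have a1 := h1 ⟨(i : ℕ), by have := i.isLt; omega⟩ ⟨(i : ℕ) + 1, by have := i.isLt; omega⟩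
      ⟨(j : ℕ), by have := j.isLt; omega⟩
    have a2 := h1 ⟨(i : ℕ), by have := i.isLt; omega⟩ ⟨(i : ℕ) + 1, by have := i.isLt; omega⟩
      ⟨(j : ℕ) + 1, by have := j.isLt; omega⟩
    have b1 := h2 ⟨(i : ℕ), by have := i.isLt; omega⟩ ⟨(j : ℕ), by have := j.isLt; omega⟩
      ⟨(j : ℕ) + 1, by have := j.isLt; omega⟩
    have b2 := h2 ⟨(i : ℕ) + 1, by have := i.isLt; omega⟩ ⟨(j : ℕ), by have := j.isLt; omega⟩
      ⟨(j : ℕ) + 1, by have := j.isLt; omega⟩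
    linarith
  · intro h
    set R : Matrix (Fin k1) (Fin k2) ℝ := fun i j => C2 i j - C1 i j with hRdef
    have h' : ∀ (n m : ℕ) (hn : n + 1 < k1) (hm : m + 1 < k2),
        R ⟨n, by omega⟩ ⟨m, by omega⟩ - R ⟨n + 1, hn⟩ ⟨m, by omega⟩
          - R ⟨n, by omega⟩ ⟨m + 1, hm⟩ + R ⟨n + 1, hn⟩ ⟨m + 1, hm⟩ = 0 := by
      intro n m hn hm
      exact h ⟨n, by omega⟩ ⟨m, by omega⟩
    have A : ∀ (n : ℕ) (hn : n + 1 < k1) (j : Fin k2),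
        R ⟨n, by omega⟩ j - R ⟨n + 1, hn⟩ j
          = R ⟨n, by omega⟩ ⟨0, hk2⟩ - R ⟨n + 1, hn⟩ ⟨0, hk2⟩ := by
      intro n hn j
      obtain ⟨m, hm⟩ := j
      induction m with
      | zero => rfl
      | succ m ih =>
        have ih' := ih (by omega)
        have hc := h' n m hn hm
        linarith
    have B : ∀ (i : Fin k1) (j : Fin k2),
        R i j - R ⟨0, hk1⟩ j = R i ⟨0, hk2⟩ - R ⟨0, hk1⟩ ⟨0, hk2⟩ := by
      intro i j
      obtain ⟨n, hn⟩ := i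
      induction n with
      | zero => simp
      | succ n ih =>
        have ih' := ih (by omega)
        have ha := A n hn j
        have ha0 := A n hn ⟨0, hk2⟩
        linarith
    refine ⟨fun i j => C1 i j + R ⟨0, hk1⟩ j, fun i i' j => by ring, fun i j j' => ?_⟩
    have b1 := B i j
    have b2 := B i j'
    have : R i j - R i j' = R ⟨0, hk1⟩ j - R ⟨0, hk1⟩ j' := by linarith
    have hr : R i j - R i j' = C2 i j - C2 i j' - (C1 i j - C1 i j') := by
      simp [hRdef]; ring
    show C2 i j - C2 i j' = (C1 i j + R ⟨0, hk1⟩ j) - (C1 i j' + R ⟨0, hk1⟩ j')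
    linarith [hr, this]
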